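/- arXiv:2409.00384 — 3 statements merged into one kernel-verified Lean document; each statement's English description precedes it below -/
import Mathlib

section
/- Let p > 2 be a prime and let a ∈ ℤ_p be a p-adic integer such that a + j is a p-adic unit for every j = 1, 2, ..., p-1. Then Σ_{k=0}^{p-1} (a+1/2)_k^4 / (a+1)_k^4 ≡ (1 / (a+1)_{(p-1)/2}^4) · Σ_{k=0}^{p-1} (1/2)_k^4 / k!^4 (mod p), i.e., the difference of the two sides lies in p ℤ_p. -/
/-!
If `a` were not divisible by `p`, then `a + j` would be divisible by `p` for `j = p - (a mod p)`;
so `a ≡ 0 (mod p)`. Hence `(a+1)_k ≡ k!` is a unit for `k < p`, all terms are `p`-integral, and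
reducing modulo `p` turns `(a+1/2)_k` into `(1/2)_k` and `(a+1)_k` into `k!`. The factor
`(a+1)_m^4 ≡ (m!)^4` with `m = (p-1)/2` is `1` by Wilson's theorem, because
`-1 = (p-1)! = m! · (m+1)_m ≡ m! · (-m)_m = (-1)^m (m!)^2`.
-/

open Finset

/-- The Pochhammer symbol `(x)_k = x(x+1)···(x+k-1)` in a commutative ring. -/
def poch {R : Type*} [CommRing R] (x : R) (k : ℕ) : R :=
  ∏ j ∈ Finset.range k, (x + (j : R))

open Nat

section Poch

variable {R : Type*} [CommRing R]

theorem poch_eq_eval_ascPochhammer (x : R) (k : ℕ) : poch x k = (ascPochhammer R k).eval x := by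
  induction k with
  | zero => simp [poch]
  | succ k ih => rw [poch, prod_range_succ, ← poch, ih, ascPochhammer_succ_eval]

theorem poch_one (k : ℕ) : poch (1 : R) k = k ! := by
  rw [poch_eq_eval_ascPochhammer, ascPochhammer_eval_one]

theorem map_poch {S : Type*} [CommRing S] (f : R →+* S) (x : R) (k : ℕ) :
    f (poch x k) = poch (f x) k := by
  simp [poch, map_prod]

end Poch

theorem map_ringInverse {M₀ G₀ F : Type*} [MonoidWithZero M₀] [GroupWithZero G₀] [FunLike F M₀ G₀]
    [MonoidHomClass F M₀ G₀] (f : F) {x : M₀} (hx : IsUnit x) : f (Ring.inverse x) = (f x)⁻¹ := by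
  obtain ⟨u, rfl⟩ := hx
  rw [Ring.inverse_unit, map_units_inv]

namespace ZMod

theorem eq_zero_of_forall_isUnit_add {n : ℕ} [NeZero n] {x : ZMod n}
    (hx : ∀ j ∈ Icc 1 (n - 1), IsUnit (x + j)) : x = 0 := by
  by_contra hx0
  have : Nontrivial (ZMod n) := nontrivial_of_ne x 0 hx0
  have hj : (-x).val ∈ Icc 1 (n - 1) := by
    have hlt := (-x).val_lt
    have hpos := (val_pos (n := n)).2 (neg_ne_zero.2 hx0)
    rw [mem_Icc]; omega
  simpa using hx _ hj

theorem factorial_pred_div_two_pow_four (p : ℕ) [hp : Fact p.Prime] :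
    (((p - 1) / 2)! : ZMod p) ^ 4 = 1 := by
  obtain rfl | hodd := hp.out.eq_two_or_odd'
  · simp
  set m := (p - 1) / 2
  have hpm : p = m + m + 1 := by obtain ⟨r, rfl⟩ := hodd; omega
  have hneg : (m : ZMod p) + 1 = -m := by
    have h0 : ((m + m + 1 : ℕ) : ZMod p) = 0 := by rw [← hpm, natCast_self]
    push_cast at h0
    linear_combination h0
  have hw : ((p - 1)! : ZMod p) = (-1) ^ m * (m ! : ZMod p) ^ 2 := by
    rw [show p - 1 = m + m by omega, ← factorial_mul_ascPochhammer, hneg,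
      ascPochhammer_eval_neg_eq_descPochhammer, descPochhammer_eval_eq_descFactorial,
      descFactorial_self]
    ring
  calc (m ! : ZMod p) ^ 4 = ((-1) ^ m * (m ! : ZMod p) ^ 2) ^ 2 := by
        rw [mul_pow, ← pow_mul, mul_comm m, pow_mul, neg_one_sq, one_pow, one_mul, ← pow_mul]
    _ = 1 := by rw [← hw, wilsons_lemma, neg_one_sq]

theorem factorial_ne_zero {p k : ℕ} [hp : Fact p.Prime] (hk : k < p) : (k ! : ZMod p) ≠ 0 := by
  rw [Ne, natCast_eq_zero_iff, hp.out.dvd_factorial]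
  omega

end ZMod

namespace PadicInt

variable {p : ℕ} [Fact p.Prime]

theorem isUnit_iff_toZMod_ne_zero {x : ℤ_[p]} : IsUnit x ↔ toZMod x ≠ 0 := by
  rw [← IsLocalRing.notMem_maximalIdeal, ← ker_toZMod, RingHom.mem_ker]

theorem dvd_iff_toZMod_eq_zero {x : ℤ_[p]} : (p : ℤ_[p]) ∣ x ↔ toZMod x = 0 := by
  rw [← RingHom.mem_ker, ker_toZMod, maximalIdeal_eq_span_p, Ideal.mem_span_singleton]

-- Non-units form the kernel of `toZMod`, so both sides vanish on them.
theorem toZMod_ringInverse (x : ℤ_[p]) : toZMod (Ring.inverse x) = (toZMod x)⁻¹ := by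
  by_cases hx : IsUnit x
  · exact map_ringInverse _ hx
  · rw [Ring.inverse_non_unit _ hx, map_zero, not_not.1 (mt isUnit_iff_toZMod_ne_zero.2 hx),
      inv_zero]

theorem coe_ringInverse {x : ℤ_[p]} (hx : IsUnit x) :
    ((Ring.inverse x : ℤ_[p]) : ℚ_[p]) = (x : ℚ_[p])⁻¹ :=
  map_ringInverse Coe.ringHom hx

theorem coe_sum_mul_ringInverse {ι : Type*} {s : Finset ι} {f g : ι → ℤ_[p]}
    (hg : ∀ i ∈ s, IsUnit (g i)) :
    ((∑ i ∈ s, f i * Ring.inverse (g i) : ℤ_[p]) : ℚ_[p]) = ∑ i ∈ s, (f i : ℚ_[p]) / g i := by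
  rw [coe_sum]
  refine sum_congr rfl fun i hi => ?_
  rw [coe_mul, coe_ringInverse (hg i hi), div_eq_mul_inv]

theorem exists_eq_p_mul_of_toZMod_eq_zero {x : ℚ_[p]} (z : ℤ_[p]) (hzx : (z : ℚ_[p]) = x)
    (hz : toZMod z = 0) : ∃ y : ℤ_[p], x = p * y := by
  obtain ⟨y, rfl⟩ := dvd_iff_toZMod_eq_zero.2 hz
  exact ⟨y, by rw [← hzx, coe_mul, coe_natCast]⟩

@[simp, norm_cast]
theorem coe_poch (x : ℤ_[p]) (k : ℕ) : ((poch x k : ℤ_[p]) : ℚ_[p]) = poch (x : ℚ_[p]) k :=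
  map_poch Coe.ringHom x k

end PadicInt

/-- For an odd prime `p` and a `p`-adic integer `a` with `a + j` a `p`-adic unit for
`j = 1, …, p-1`, one has
`Σ_{k=0}^{p-1} (a+1/2)_k^4/(a+1)_k^4 ≡ (a+1)_{(p-1)/2}^{-4} · Σ_{k=0}^{p-1} (1/2)_k^4/k!^4`
modulo `p`, i.e. the difference of the two sides (elements of `ℚ_p` that in fact lie
in `ℤ_p`) belongs to `p ℤ_p`. -/
theorem padic_sum_congr (p : ℕ) [hp : Fact p.Prime] (hp2 : 2 < p) (a : ℤ_[p])
    (ha : ∀ j ∈ Finset.Icc 1 (p - 1), IsUnit (a + (j : ℤ_[p]))) :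
    ∃ y : ℤ_[p],
      (∑ k ∈ Finset.range p,
          poch ((a : ℚ_[p]) + 1 / 2) k ^ 4 / poch ((a : ℚ_[p]) + 1) k ^ 4)
        - (1 / poch ((a : ℚ_[p]) + 1) ((p - 1) / 2) ^ 4) *
            (∑ k ∈ Finset.range p,
              poch ((1 : ℚ_[p]) / 2) k ^ 4 / (k.factorial : ℚ_[p]) ^ 4)
      = (p : ℚ_[p]) * (y : ℚ_[p]) := by
  have ha0 : PadicInt.toZMod a = 0 :=
    ZMod.eq_zero_of_forall_isUnit_add fun j hj => by simpa using (ha j hj).map PadicInt.toZMod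
  have hpoch (k : ℕ) : PadicInt.toZMod (poch (a + 1) k) = k ! := by
    simp [map_poch, ha0, poch_one]
  have hunit (k : ℕ) (hk : k < p) : IsUnit (poch (a + 1) k ^ 4) ∧ IsUnit ((k ! : ℤ_[p]) ^ 4) := by
    simp only [isUnit_pow_iff four_ne_zero, PadicInt.isUnit_iff_toZMod_ne_zero, hpoch, map_natCast]
    exact ⟨ZMod.factorial_ne_zero hk, ZMod.factorial_ne_zero hk⟩
  have h2 : IsUnit (2 : ℤ_[p]) := by
    simpa using PadicInt.isUnit_iff.2 <| PadicInt.norm_natCast_eq_one_iff.2 <|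
      (Nat.coprime_primes hp.out Nat.prime_two).2 hp2.ne'
  refine PadicInt.exists_eq_p_mul_of_toZMod_eq_zero
    (∑ k ∈ range p, poch (a + Ring.inverse 2) k ^ 4 * Ring.inverse (poch (a + 1) k ^ 4)
      - Ring.inverse (poch (a + 1) ((p - 1) / 2) ^ 4) *
        ∑ k ∈ range p, poch (Ring.inverse 2) k ^ 4 * Ring.inverse ((k ! : ℤ_[p]) ^ 4)) ?_ ?_
  · rw [PadicInt.coe_sub, PadicInt.coe_mul,
      PadicInt.coe_sum_mul_ringInverse fun k hk => (hunit k (mem_range.1 hk)).1,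
      PadicInt.coe_sum_mul_ringInverse fun k hk => (hunit k (mem_range.1 hk)).2,
      PadicInt.coe_ringInverse (hunit _ (by omega)).1]
    push_cast [PadicInt.coe_ringInverse h2, one_div]
    rfl
  · simp [map_poch, PadicInt.toZMod_ringInverse, ha0, poch_one,
      ZMod.factorial_pred_div_two_pow_four]
end

section
/- Let n ≥ 3 be an odd integer, let ζ ∈ ℂ be a primitive n-th root of unity, and let a ∈ ℂ satisfy a ζ^j ≠ 1 and a ≠ ζ^j for all j = 1, ..., n-1. Then F_n(a; ζ) = [a^{n-1} ∏_{j=1}^{n-1} (ζ^j − 1)^2] / [∏_{j=1}^{(n-1)/2} (1 − a ζ^j)^2 · ∏_{j=(n+1)/2}^{n-1} (a − ζ^j)^2] · F_n(1; ζ). -/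
/-!
Because `ζ^((n+1)/2) = ζ^(-(n-1)/2)`, both numerator symbols equal `(aζ^(m+1); ζ)_k` with
`m = (n-1)/2`, and `(aζ^(m+1); ζ)_k (aζ; ζ)_m = (aζ; ζ)_k (aζ^(k+1); ζ)_m`. Hence
`F_n(a; ζ) (aζ; ζ)_m^4 = Σ_k ζ^k P(aζ^(k+1))` for the polynomial `P(x) = (x; ζ)_m^4` of
degree `2(n-1)`. Averaging over the `n`-th roots of unity kills every monomial of `P` except
`x^(n-1)`, so this equals `c a^(n-1)` with `c` independent of `a`. Comparing with `a = 1` and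
pairing `1 - aζ^j` with `a - ζ^(n-j)` through `(a - ζ^(n-j)) ζ^j = aζ^j - 1` gives the formula.
-/

open Finset Complex

/-- The `q`-Pochhammer symbol `(x; q)_k = ∏_{j=0}^{k-1} (1 − x q^j)`. -/
def qPoch (x q : ℂ) (k : ℕ) : ℂ :=
  ∏ j ∈ Finset.range k, (1 - x * q ^ j)

/-- For odd `n ≥ 3` and `q ≠ 0`,
`F_n(a; q) = Σ_{k=0}^{n-1} (a q^{(n+1)/2}; q)_k^2 (a q^{(−n+1)/2}; q)_k^2 / (a q; q)_k^4 · q^k`,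
where `q^{(−n+1)/2} = (q⁻¹)^{(n-1)/2}`. -/
noncomputable def Fq (n : ℕ) (a q : ℂ) : ℂ :=
  ∑ k ∈ Finset.range n,
    qPoch (a * q ^ ((n + 1) / 2)) q k ^ 2 * qPoch (a * (q⁻¹) ^ ((n - 1) / 2)) q k ^ 2 /
      qPoch (a * q) q k ^ 4 * q ^ k

open Polynomial

theorem IsPrimitiveRoot.geom_sum_pow_eq_ite {R : Type*} [CommRing R] [IsDomain R] {ζ : R}
    {n : ℕ} (hζ : IsPrimitiveRoot ζ n) (i : ℕ) :
    ∑ k ∈ range n, (ζ ^ i) ^ k = if n ∣ i then (n : R) else 0 := by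
  split_ifs with hi
  · simp [(hζ.pow_eq_one_iff_dvd i).mpr hi]
  · have hne : ζ ^ i ≠ 1 := mt (hζ.pow_eq_one_iff_dvd i).mp hi
    refine eq_zero_of_ne_zero_of_mul_left_eq_zero (sub_ne_zero_of_ne hne.symm) ?_
    rw [mul_neg_geom_sum, ← pow_mul, mul_comm, pow_mul, hζ.pow_eq_one, one_pow, sub_self]

theorem IsPrimitiveRoot.sum_pow_mul_eval_mul_pow_succ {R : Type*} [CommRing R] [IsDomain R]
    {ζ : R} {n : ℕ} (hζ : IsPrimitiveRoot ζ n) {p : R[X]} (hp : p.natDegree < 2 * n - 1)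
    (b : R) :
    ∑ k ∈ range n, ζ ^ k * p.eval (b * ζ ^ (k + 1)) =
      n * ζ ^ (n - 1) * p.coeff (n - 1) * b ^ (n - 1) := by
  have hterm : ∀ i, ∑ k ∈ range n, ζ ^ k * (p.coeff i * (b * ζ ^ (k + 1)) ^ i)
      = p.coeff i * b ^ i * ζ ^ i * ∑ k ∈ range n, (ζ ^ (i + 1)) ^ k := by
    intro i
    rw [mul_sum]
    refine sum_congr rfl fun k _ => by ring
  have hn : 0 < n := by omega
  simp_rw [eval_eq_sum_range' hp, mul_sum]
  rw [sum_comm]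
  simp_rw [hterm, hζ.geom_sum_pow_eq_ite]
  rw [sum_eq_single (n - 1)]
  · rw [if_pos ⟨1, by omega⟩]
    ring
  · intro i hi hne
    refine mul_eq_zero_of_right _ (if_neg fun ⟨c, hc⟩ => hne ?_)
    have hc2 : c < 2 := Nat.lt_of_mul_lt_mul_left (a := n) (by rw [mem_range] at hi; omega)
    interval_cases c <;> omega
  · exact fun h => absurd (mem_range.mpr (by omega)) h

theorem qPoch_add (x q : ℂ) (k l : ℕ) :
    qPoch x q (k + l) = qPoch x q k * qPoch (x * q ^ k) q l := by
  simp only [qPoch, prod_range_add, pow_add, mul_assoc]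

theorem qPoch_ne_zero {x q : ℂ} {k : ℕ} (h : ∀ j < k, x * q ^ j ≠ 1) : qPoch x q k ≠ 0 :=
  prod_ne_zero_iff.mpr fun j hj => sub_ne_zero.mpr (h j (mem_range.mp hj)).symm

theorem qPoch_mul_pow_succ_mul_qPoch (x q : ℂ) (k l : ℕ) :
    qPoch (x * q ^ (l + 1)) q k * qPoch (x * q) q l =
      qPoch (x * q) q k * qPoch (x * q ^ (k + 1)) q l := by
  have h := (qPoch_add (x * q) q l k).symm.trans (add_comm l k ▸ qPoch_add (x * q) q k l)
  rwa [mul_assoc, ← pow_succ', mul_assoc, ← pow_succ', mul_comm] at h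

noncomputable def qPochPoly (q : ℂ) (k : ℕ) : ℂ[X] :=
  ∏ j ∈ range k, (1 - C (q ^ j) * X)

theorem eval_qPochPoly (q x : ℂ) (k : ℕ) : (qPochPoly q k).eval x = qPoch x q k := by
  simp [qPochPoly, qPoch, eval_prod, mul_comm]

theorem natDegree_qPochPoly_le (q : ℂ) (k : ℕ) : (qPochPoly q k).natDegree ≤ k := by
  refine (natDegree_prod_le _ _).trans ?_
  have h : ∀ j ∈ range k, (1 - C (q ^ j) * X).natDegree ≤ 1 := fun j _ => by compute_degree
  simpa using sum_le_card_nsmul (range k) _ 1 h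

theorem inv_pow_half_eq_pow_half {q : ℂ} {n : ℕ} (hq : q ^ n = 1) (hodd : Odd n) :
    q⁻¹ ^ ((n - 1) / 2) = q ^ ((n + 1) / 2) := by
  obtain ⟨m, rfl⟩ := hodd
  rw [show (2 * m + 1 - 1) / 2 = m by omega, show (2 * m + 1 + 1) / 2 = m + 1 by omega, inv_pow]
  exact inv_eq_of_mul_eq_one_right (by rw [← pow_add, ← hq]; ring_nf)

theorem Fq_mul_qPoch_pow_four {n : ℕ} {a q : ℂ} (hq : q ^ n = 1) (hodd : Odd n)
    (ha : ∀ j ∈ Icc 1 (n - 1), a * q ^ j ≠ 1) :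
    Fq n a q * qPoch (a * q) q ((n - 1) / 2) ^ 4 =
      ∑ k ∈ range n, q ^ k * qPoch (a * q ^ (k + 1)) q ((n - 1) / 2) ^ 4 := by
  have hn : (n + 1) / 2 = (n - 1) / 2 + 1 := by obtain ⟨m, rfl⟩ := hodd; omega
  rw [Fq, sum_mul, inv_pow_half_eq_pow_half hq hodd, hn]
  refine sum_congr rfl fun k hk => ?_
  have hden : qPoch (a * q) q k ≠ 0 := qPoch_ne_zero fun j hj => by
    rw [mul_assoc, ← pow_succ']
    exact ha (j + 1) (mem_Icc.mpr ⟨by omega, by rw [mem_range] at hk; omega⟩)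
  set l := (n - 1) / 2
  calc qPoch (a * q ^ (l + 1)) q k ^ 2 * qPoch (a * q ^ (l + 1)) q k ^ 2 /
        qPoch (a * q) q k ^ 4 * q ^ k * qPoch (a * q) q l ^ 4
      = q ^ k * (qPoch (a * q ^ (l + 1)) q k * qPoch (a * q) q l) ^ 4 /
          qPoch (a * q) q k ^ 4 := by
        ring
    _ = q ^ k * qPoch (a * q ^ (k + 1)) q l ^ 4 := by
        rw [qPoch_mul_pow_succ_mul_qPoch]
        field_simp

theorem exists_Fq_mul_qPoch_pow_four_eq {n : ℕ} {ζ : ℂ} (hζ : IsPrimitiveRoot ζ n)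
    (hodd : Odd n) :
    ∃ c : ℂ, ∀ b : ℂ, (∀ j ∈ Icc 1 (n - 1), b * ζ ^ j ≠ 1) →
      Fq n b ζ * qPoch (b * ζ) ζ ((n - 1) / 2) ^ 4 = c * b ^ (n - 1) := by
  have hdeg : (qPochPoly ζ ((n - 1) / 2) ^ 4).natDegree < 2 * n - 1 := by
    have := natDegree_qPochPoly_le ζ ((n - 1) / 2)
    have := natDegree_pow_le (p := qPochPoly ζ ((n - 1) / 2)) (n := 4)
    obtain ⟨m, rfl⟩ := hodd
    omega
  refine ⟨n * ζ ^ (n - 1) * (qPochPoly ζ ((n - 1) / 2) ^ 4).coeff (n - 1), fun b hb => ?_⟩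
  rw [Fq_mul_qPoch_pow_four hζ.pow_eq_one hodd hb, ← hζ.sum_pow_mul_eval_mul_pow_succ hdeg]
  simp only [eval_pow, eval_qPochPoly]

theorem qPoch_pow_four_eq {n : ℕ} {q : ℂ} (hq : q ^ n = 1) (hodd : Odd n) (b : ℂ) :
    qPoch (b * q) q ((n - 1) / 2) ^ 4 =
      (∏ j ∈ Icc 1 ((n - 1) / 2), (1 - b * q ^ j) ^ 2) *
        (∏ j ∈ Icc ((n + 1) / 2) (n - 1), (b - q ^ j) ^ 2) *
          ∏ j ∈ Icc 1 ((n - 1) / 2), (q ^ j) ^ 2 := by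
  obtain ⟨m, rfl⟩ := hodd
  rw [show (2 * m + 1 - 1) / 2 = m by omega, show (2 * m + 1 + 1) / 2 = m + 1 by omega,
    show 2 * m + 1 - 1 = 2 * m by omega]
  have hleft : qPoch (b * q) q m = ∏ j ∈ Icc 1 m, (1 - b * q ^ j) := by
    rw [← Ico_add_one_right_eq_Icc, prod_Ico_eq_prod_range, qPoch]
    simp [pow_succ', mul_assoc, add_comm]
  have hright : ∏ j ∈ Icc (m + 1) (2 * m), (b - q ^ j) ^ 2 =
      ∏ j ∈ Icc 1 m, (b - q ^ (2 * m + 1 - j)) ^ 2 := by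
    rw [← Ico_add_one_right_eq_Icc, ← Ico_add_one_right_eq_Icc,
      prod_Ico_reflect (fun j => (b - q ^ j) ^ 2) 1 (by omega : m + 1 ≤ 2 * m + 1 + 1)]
    rw [show 2 * m + 1 + 1 - (m + 1) = m + 1 by omega, Nat.add_sub_cancel]
  rw [hleft, hright, ← prod_pow, ← prod_mul_distrib, ← prod_mul_distrib]
  refine prod_congr rfl fun j hj => ?_
  have hinv : q ^ (2 * m + 1 - j) * q ^ j = 1 := by
    rw [← pow_add, Nat.sub_add_cancel (by rw [mem_Icc] at hj; omega), hq]
  linear_combination (1 - b * q ^ j) ^ 2 * (2 * b * q ^ j - q ^ (2 * m + 1 - j) * q ^ j - 1) * hinv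

theorem prod_Icc_one_eq_mul_of_odd {M : Type*} [CommMonoid M] {n : ℕ} (hodd : Odd n)
    (f : ℕ → M) :
    ∏ j ∈ Icc 1 (n - 1), f j =
      (∏ j ∈ Icc 1 ((n - 1) / 2), f j) * ∏ j ∈ Icc ((n + 1) / 2) (n - 1), f j := by
  have hn : (n + 1) / 2 = (n - 1) / 2 + 1 := by obtain ⟨m, rfl⟩ := hodd; omega
  rw [hn, Icc_add_one_left_eq_Ioc, ← zero_add 1, Icc_add_one_left_eq_Ioc, Icc_add_one_left_eq_Ioc,
    prod_Ioc_consecutive _ (Nat.zero_le _) (by omega)]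

theorem F_eval_at_root_of_unity_general (n : ℕ) (hodd : Odd n)
    (ζ : ℂ) (hζ : IsPrimitiveRoot ζ n) (a : ℂ)
    (ha : ∀ j ∈ Finset.Icc 1 (n - 1), a * ζ ^ j ≠ 1 ∧ a ≠ ζ ^ j) :
    Fq n a ζ =
      a ^ (n - 1) * (∏ j ∈ Finset.Icc 1 (n - 1), (ζ ^ j - 1) ^ 2) /
        ((∏ j ∈ Finset.Icc 1 ((n - 1) / 2), (1 - a * ζ ^ j) ^ 2) *
          ∏ j ∈ Finset.Icc ((n + 1) / 2) (n - 1), (a - ζ ^ j) ^ 2) *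
      Fq n 1 ζ := by
  have hn := hodd.pos
  obtain ⟨c, hc⟩ := exists_Fq_mul_qPoch_pow_four_eq hζ hodd
  have hFa := hc a fun j hj => (ha j hj).1
  have hF1 := hc 1 fun j hj => by
    obtain ⟨hj1, hjn⟩ := mem_Icc.mp hj
    rw [one_mul]
    exact hζ.pow_ne_one_of_pos_of_lt (by omega) (by omega)
  rw [qPoch_pow_four_eq hζ.pow_eq_one hodd] at hFa hF1
  simp only [one_mul, one_pow, mul_one] at hF1
  have hE1 : ∏ j ∈ Icc 1 ((n - 1) / 2), (1 - a * ζ ^ j) ^ 2 ≠ 0 :=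
    prod_ne_zero_iff.mpr fun j hj => by
      obtain ⟨hj1, hjm⟩ := mem_Icc.mp hj
      exact pow_ne_zero _ (sub_ne_zero.mpr (ha j (mem_Icc.mpr ⟨hj1, by omega⟩)).1.symm)
  have hE2 : ∏ j ∈ Icc ((n + 1) / 2) (n - 1), (a - ζ ^ j) ^ 2 ≠ 0 :=
    prod_ne_zero_iff.mpr fun j hj => by
      obtain ⟨hjm, hjn⟩ := mem_Icc.mp hj
      exact pow_ne_zero _ (sub_ne_zero.mpr (ha j (mem_Icc.mpr ⟨by omega, hjn⟩)).2)
  have hW : ∏ j ∈ Icc 1 ((n - 1) / 2), (ζ ^ j) ^ 2 ≠ 0 :=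
    prod_ne_zero_iff.mpr fun _ _ => pow_ne_zero _ (pow_ne_zero _ (hζ.ne_zero hn.ne'))
  have hP : ∏ j ∈ Icc 1 (n - 1), (ζ ^ j - 1) ^ 2 = ∏ j ∈ Icc 1 (n - 1), (1 - ζ ^ j) ^ 2 :=
    prod_congr rfl fun _ _ => by ring
  rw [hP, prod_Icc_one_eq_mul_of_odd hodd, div_mul_eq_mul_div, eq_div_iff (mul_ne_zero hE1 hE2)]
  refine mul_right_cancel₀ hW ?_
  linear_combination hFa - a ^ (n - 1) * hF1

theorem F_eval_at_root_of_unity (n : ℕ) (hn3 : 3 ≤ n) (hodd : Odd n)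
    (ζ : ℂ) (hζ : IsPrimitiveRoot ζ n) (a : ℂ)
    (ha : ∀ j ∈ Finset.Icc 1 (n - 1), a * ζ ^ j ≠ 1 ∧ a ≠ ζ ^ j) :
    Fq n a ζ =
      a ^ (n - 1) * (∏ j ∈ Finset.Icc 1 (n - 1), (ζ ^ j - 1) ^ 2) /
        ((∏ j ∈ Finset.Icc 1 ((n - 1) / 2), (1 - a * ζ ^ j) ^ 2) *
          ∏ j ∈ Finset.Icc ((n + 1) / 2) (n - 1), (a - ζ ^ j) ^ 2) *
      Fq n 1 ζ :=
  F_eval_at_root_of_unity_general n hodd ζ hζ a ha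
end

section
/- Let c(n) denote the n-th coefficient of the formal power series X · ∏_{m=1}^∞ (1 − X^{3m})^8 over ℤ. Then c(p) = 0 for every prime p with p ≡ 2 (mod 3). -/
open Finset

/-- `c n` is the `n`-th coefficient of the formal power series
`X * ∏_{m=1}^∞ (1 − X^{3m})^8` over `ℤ` (the `q`-expansion of the CM newform
`η(3τ)^8`); since the factors with `3m > n` do not affect the coefficient of `X^n`,
we may truncate the infinite product at `m = n`. -/
noncomputable def c (n : ℕ) : ℤ :=
  PowerSeries.coeff (R := ℤ) n
    (PowerSeries.X * ∏ m ∈ Finset.Icc 1 n, (1 - PowerSeries.X ^ (3 * m)) ^ 8)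

/-! The series is `X` times a series in `X ^ 3`, so its coefficients vanish outside the
residue class `1 mod 3`. -/

open PowerSeries

namespace PowerSeries

section Semiring

variable {R : Type*} [Semiring R]

def supportedOnMultiples (d : ℕ) : Subsemiring R⟦X⟧ where
  carrier := {f | ∀ k, ¬ d ∣ k → coeff k f = 0}
  zero_mem' _ _ := map_zero _
  add_mem' hf hg k hk := by rw [map_add, hf k hk, hg k hk, add_zero]
  one_mem' k hk := by
    rw [coeff_one, if_neg (by rintro rfl; exact hk (dvd_zero d))]
  mul_mem' {f g} hf hg k hk := by
    rw [coeff_mul]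
    refine sum_eq_zero fun ⟨i, j⟩ hij => ?_
    rw [HasAntidiagonal.mem_antidiagonal] at hij
    by_cases hi : d ∣ i
    · rw [hg j fun hj => hk (hij ▸ dvd_add hi hj), mul_zero]
    · rw [hf i hi, zero_mul]

variable {d : ℕ}

theorem mem_supportedOnMultiples {f : R⟦X⟧} :
    f ∈ supportedOnMultiples d ↔ ∀ k, ¬ d ∣ k → coeff k f = 0 :=
  Iff.rfl

theorem X_pow_mem_supportedOnMultiples (m : ℕ) :
    (X ^ (d * m) : R⟦X⟧) ∈ supportedOnMultiples d := fun k hk => by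
  rw [coeff_X_pow, if_neg (by rintro rfl; exact hk (dvd_mul_right d m))]

end Semiring

section Ring

variable {R : Type*} [Ring R] {d : ℕ}

theorem neg_mem_supportedOnMultiples {f : R⟦X⟧} (hf : f ∈ supportedOnMultiples d) :
    -f ∈ supportedOnMultiples d := fun k hk => by
  rw [map_neg, hf k hk, neg_zero]

theorem one_sub_X_pow_mem_supportedOnMultiples (m : ℕ) :
    (1 - X ^ (d * m) : R⟦X⟧) ∈ supportedOnMultiples d := by
  rw [sub_eq_add_neg]
  exact add_mem (one_mem _) (neg_mem_supportedOnMultiples (X_pow_mem_supportedOnMultiples m))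

end Ring

end PowerSeries

theorem eta3_pow8_coeff_vanishes_general (p : ℕ) (hmod : p % 3 = 2) :
    c p = 0 := by
  have hprod : ∏ m ∈ Icc 1 p, (1 - X ^ (3 * m)) ^ 8 ∈ supportedOnMultiples (R := ℤ) 3 :=
    prod_mem fun m _ => pow_mem (one_sub_X_pow_mem_supportedOnMultiples m) 8
  obtain ⟨k, rfl⟩ : ∃ k, p = k + 1 := ⟨p - 1, by omega⟩
  rw [c, coeff_succ_X_mul]
  exact mem_supportedOnMultiples.mp hprod k (by omega)

theorem eta3_pow8_coeff_vanishes (p : ℕ) (hp : p.Prime) (hmod : p % 3 = 2) :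
    c p = 0 :=
  eta3_pow8_coeff_vanishes_general p hmod
end
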